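/- arXiv:2004.14304 — 2 statements merged into one kernel-verified Lean document; each statement's English description precedes it below -/
import Mathlib

section
/- (Lemma 5.1) Let G = (U,V,E) be a bipartite stochastic graph with n := |V|, and for S ⊆ V let G[S] denote the induced stochastic graph obtained by restricting the online vertices to S (keeping U and restricting p, w, ℓ accordingly). Then for every integer 1 ≤ t ≤ n, the average of LPOPT_new(G[S]) over all subsets S ⊆ V with |S| = t, namely (1/C(n,t)) · Σ_{S⊆V, |S|=t} LPOPT_new(G[S]), is at least (t/n) · LPOPT_new(G). -/
open Finset

/-- A bipartite stochastic graph on offline vertices `U` and online vertices `V`,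
with edge probabilities `p`, edge weights `w` and patience values `patience`. -/
structure StochasticGraph (U V : Type) [Fintype U] [Fintype V] [DecidableEq U] where
  p : U → V → ℝ
  w : U → V → ℝ
  patience : V → ℕ
  p_nonneg : ∀ u v, 0 ≤ p u v
  p_le_one : ∀ u v, p u v ≤ 1
  w_nonneg : ∀ u v, 0 ≤ w u v
  patience_pos : ∀ v, 1 ≤ patience v

/-- `Tup U ℓ` encodes `U^{(≤ℓ)}`, the tuples of pairwise-distinct elements of `U`
of length between `1` and `ℓ`: a tuple of length `j+1` (for `j < ℓ`) is an injection
`Fin (j+1) ↪ U`. -/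
abbrev Tup (U : Type) (ℓ : ℕ) := Σ j : Fin ℓ, (Fin (j.1 + 1) ↪ U)

variable {U V : Type} [Fintype U] [Fintype V] [DecidableEq U] [DecidableEq V]

/-- `g_v^i(u) = p_{u_i,v} · ∏_{j<i} (1 − p_{u_j,v})`: the probability that `(u_i,v)` is
the first active edge when the edges of the tuple `u` are probed in order. -/
noncomputable def gval (G : StochasticGraph U V) (v : V) {ℓ : ℕ} (u : Tup U ℓ)
    (i : Fin (u.1.1 + 1)) : ℝ :=
  G.p (u.2 i) v * ∏ j ∈ Finset.univ.filter (fun j => j < i), (1 - G.p (u.2 j) v)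

/-- Contribution `Σ_i w_{u_i,v}·g_v^i(u)` of the tuple `u` at online vertex `v` to the
LP-new objective. -/
noncomputable def objTerm (G : StochasticGraph U V) (v : V)
    (u : Tup U (G.patience v)) : ℝ :=
  ∑ i, G.w (u.2 i) v * gval G v u i

/-- Feasibility for LP-new: nonnegativity, the per-online-vertex distribution
constraint, and the per-offline-vertex matching constraint. -/
def FeasNew (G : StochasticGraph U V) (x : ∀ v : V, Tup U (G.patience v) → ℝ) : Prop :=
  (∀ v u, 0 ≤ x v u) ∧
  (∀ v, ∑ u, x v u ≤ 1) ∧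
  (∀ u0 : U, ∑ v, ∑ u : Tup U (G.patience v), ∑ i,
      (if u.2 i = u0 then gval G v u i * x v u else 0) ≤ 1)

/-- The LP-new objective. -/
noncomputable def objNew (G : StochasticGraph U V)
    (x : ∀ v : V, Tup U (G.patience v) → ℝ) : ℝ :=
  ∑ v, ∑ u, objTerm G v u * x v u

/-- `LPOPT_new(G)`: the optimum value of LP-new. -/
noncomputable def LPOPTnew (G : StochasticGraph U V) : ℝ :=
  sSup {r | ∃ x, FeasNew G x ∧ objNew G x = r}

/-- The induced stochastic graph `G[S]` obtained by restricting the online vertices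
to `S ⊆ V`. -/
def StochasticGraph.restrict (G : StochasticGraph U V) (S : Finset V) :
    StochasticGraph U {v : V // v ∈ S} where
  p := fun u v => G.p u v.1
  w := fun u v => G.w u v.1
  patience := fun v => G.patience v.1
  p_nonneg := fun u v => G.p_nonneg u v.1
  p_le_one := fun u v => G.p_le_one u v.1
  w_nonneg := fun u v => G.w_nonneg u v.1
  patience_pos := fun v => G.patience_pos v.1

section Aux

lemma gval_nonneg (G : StochasticGraph U V) (v : V) {ℓ : ℕ} (u : Tup U ℓ)
    (i : Fin (u.1.1 + 1)) : 0 ≤ gval G v u i := by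
  refine mul_nonneg (G.p_nonneg _ _) (Finset.prod_nonneg fun j _ => ?_)
  have := G.p_le_one (u.2 j) v
  linarith

lemma objTerm_nonneg (G : StochasticGraph U V) (v : V) (u : Tup U (G.patience v)) :
    0 ≤ objTerm G v u :=
  Finset.sum_nonneg fun i _ => mul_nonneg (G.w_nonneg _ _) (gval_nonneg G v u i)

lemma feas_zero (G : StochasticGraph U V) : FeasNew G (fun _ _ => 0) := by
  refine ⟨fun _ _ => le_refl 0, fun v => by simp, fun u0 => by simp⟩

lemma zero_mem_feasSet (G : StochasticGraph U V) :
    (0 : ℝ) ∈ {r | ∃ x, FeasNew G x ∧ objNew G x = r} :=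
  ⟨fun _ _ => 0, feas_zero G, by simp [objNew]⟩

lemma x_le_one_of_feas (G : StochasticGraph U V) {x : ∀ v : V, Tup U (G.patience v) → ℝ}
    (hx : FeasNew G x) (v : V) (u : Tup U (G.patience v)) : x v u ≤ 1 :=
  le_trans (Finset.single_le_sum (fun u _ => hx.1 v u) (Finset.mem_univ u)) (hx.2.1 v)

lemma objNew_le_bound (G : StochasticGraph U V) {x : ∀ v : V, Tup U (G.patience v) → ℝ}
    (hx : FeasNew G x) : objNew G x ≤ ∑ v, ∑ u, objTerm G v u := by
  refine Finset.sum_le_sum fun v _ => Finset.sum_le_sum fun u _ => ?_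
  calc objTerm G v u * x v u ≤ objTerm G v u * 1 :=
        mul_le_mul_of_nonneg_left (x_le_one_of_feas G hx v u) (objTerm_nonneg G v u)
    _ = objTerm G v u := mul_one _

lemma bddAbove_feasSet (G : StochasticGraph U V) :
    BddAbove {r | ∃ x, FeasNew G x ∧ objNew G x = r} := by
  refine ⟨∑ v, ∑ u, objTerm G v u, ?_⟩
  rintro r ⟨x, hx, rfl⟩
  exact objNew_le_bound G hx

lemma le_LPOPTnew (G : StochasticGraph U V) {x : ∀ v : V, Tup U (G.patience v) → ℝ}
    (hx : FeasNew G x) : objNew G x ≤ LPOPTnew G :=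
  le_csSup (bddAbove_feasSet G) ⟨x, hx, rfl⟩

lemma LPOPTnew_nonneg (G : StochasticGraph U V) : 0 ≤ LPOPTnew G :=
  le_csSup (bddAbove_feasSet G) (zero_mem_feasSet G)

lemma card_filter_mem_powersetCard (t : ℕ) (ht : 1 ≤ t) (v : V) :
    (((Finset.univ : Finset V).powersetCard t).filter (fun S => v ∈ S)).card =
      (Fintype.card V - 1).choose (t - 1) := by
  have key : (((Finset.univ : Finset V).powersetCard t).filter (fun S => v ∈ S)).card =
      ((Finset.univ.erase v).powersetCard (t - 1)).card := by
    refine Finset.card_bij' (fun S _ => S.erase v) (fun T _ => insert v T) ?_ ?_ ?_ ?_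
    · intro S hS
      simp only [Finset.mem_filter, Finset.mem_powersetCard_univ] at hS
      rw [Finset.mem_powersetCard]
      refine ⟨fun x hx => ?_, ?_⟩
      · simp only [Finset.mem_erase] at hx ⊢
        exact ⟨hx.1, Finset.mem_univ _⟩
      · rw [Finset.card_erase_of_mem hS.2, hS.1]
    · intro T hT
      rw [Finset.mem_powersetCard] at hT
      have hvT : v ∉ T := fun h => by simpa using (hT.1 h)
      simp only [Finset.mem_filter, Finset.mem_powersetCard_univ]
      constructor
      · rw [Finset.card_insert_of_notMem hvT, hT.2]
        omega
      · exact Finset.mem_insert_self v T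
    · intro S hS
      simp only [Finset.mem_filter] at hS
      exact Finset.insert_erase hS.2
    · intro T hT
      rw [Finset.mem_powersetCard] at hT
      have hvT : v ∉ T := fun h => by simpa using (hT.1 h)
      exact Finset.erase_insert hvT
  rw [key, Finset.card_powersetCard, Finset.card_erase_of_mem (Finset.mem_univ v),
    Finset.card_univ]

end Aux

/-- Lemma 5.1: the average of `LPOPT_new(G[S])` over all `t`-subsets `S` of the
online vertices is at least `(t/n)·LPOPT_new(G)`, where `n = |V|`. -/
theorem avg_LPOPTnew_restrict_ge (G : StochasticGraph U V) (t : ℕ)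
    (ht1 : 1 ≤ t) (ht2 : t ≤ Fintype.card V) :
    ((t : ℝ) / (Fintype.card V : ℝ)) * LPOPTnew G ≤
      (1 / ((Fintype.card V).choose t : ℝ)) *
        ∑ S ∈ Finset.powersetCard t (Finset.univ : Finset V),
          LPOPTnew (G.restrict S) := by
  classical
  set n := Fintype.card V with hn
  have hn1 : 1 ≤ n := le_trans ht1 ht2
  set D : ℕ := (n - 1).choose (t - 1) with hD
  set C : ℕ := n.choose t with hC
  have hCpos : 0 < C := Nat.choose_pos ht2
  have hDpos : 0 < D := Nat.choose_pos (by omega)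
  -- the key identity  n * D = t * C
  have hkey : n * D = C * t := by
    have := Nat.add_one_mul_choose_eq (n - 1) (t - 1)
    have h1 : n - 1 + 1 = n := by omega
    have h2 : t - 1 + 1 = t := by omega
    simp only [Nat.succ_eq_add_one, h1, h2] at this
    simpa [hD, hC] using this
  set R : ℝ := ∑ S ∈ Finset.powersetCard t (Finset.univ : Finset V),
      LPOPTnew (G.restrict S) with hR
  have hRnonneg : 0 ≤ R :=
    Finset.sum_nonneg fun S _ => LPOPTnew_nonneg _
  -- main claim: for every feasible x, D * objNew G x ≤ R
  have main : ∀ x : ∀ v : V, Tup U (G.patience v) → ℝ, FeasNew G x →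
      (D : ℝ) * objNew G x ≤ R := by
    intro x hx
    set T : V → ℝ := fun v => ∑ u : Tup U (G.patience v), objTerm G v u * x v u with hT
    have hTnonneg : ∀ v, 0 ≤ T v := fun v =>
      Finset.sum_nonneg fun u _ => mul_nonneg (objTerm_nonneg G v u) (hx.1 v u)
    -- for each t-subset S, the restriction of x is feasible for G.restrict S
    have hrestr : ∀ S : Finset V, ∑ v ∈ S, T v ≤ LPOPTnew (G.restrict S) := by
      intro S
      set xS : ∀ v : {v : V // v ∈ S}, Tup U ((G.restrict S).patience v) → ℝ :=
        fun v u => x v.1 u with hxS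
      have hfeas : FeasNew (G.restrict S) xS := by
        refine ⟨fun v u => hx.1 v.1 u, fun v => hx.2.1 v.1, fun u0 => ?_⟩
        have hle : ∑ v : {v : V // v ∈ S}, ∑ u : Tup U (G.patience v.1), ∑ i,
            (if u.2 i = u0 then gval G v.1 u i * x v.1 u else 0) ≤
            ∑ v : V, ∑ u : Tup U (G.patience v), ∑ i,
            (if u.2 i = u0 then gval G v u i * x v u else 0) := by
          rw [Finset.sum_coe_sort S (fun v => ∑ u : Tup U (G.patience v), ∑ i,
            (if u.2 i = u0 then gval G v u i * x v u else 0))]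
          refine Finset.sum_le_sum_of_subset_of_nonneg (Finset.subset_univ S)
            fun v _ _ => Finset.sum_nonneg fun u _ => Finset.sum_nonneg fun i _ => ?_
          split
          · exact mul_nonneg (gval_nonneg G v u i) (hx.1 v u)
          · exact le_refl 0
        exact le_trans hle (hx.2.2 u0)
      have hobj : objNew (G.restrict S) xS = ∑ v ∈ S, T v := by
        rw [objNew, ← Finset.sum_coe_sort S T]
        rfl
      calc ∑ v ∈ S, T v = objNew (G.restrict S) xS := hobj.symm
        _ ≤ LPOPTnew (G.restrict S) := le_LPOPTnew _ hfeas
    -- sum the restriction bound over all t-subsets and double count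
    have hsum : ∑ S ∈ Finset.powersetCard t (Finset.univ : Finset V), ∑ v ∈ S, T v
        = (D : ℝ) * ∑ v, T v := by
      have step1 : ∀ S : Finset V, ∑ v ∈ S, T v =
          ∑ v : V, (if v ∈ S then T v else 0) := by
        intro S
        rw [Finset.sum_ite_mem]
        congr 1
        simp
      calc ∑ S ∈ Finset.powersetCard t (Finset.univ : Finset V), ∑ v ∈ S, T v
          = ∑ S ∈ Finset.powersetCard t (Finset.univ : Finset V),
              ∑ v : V, (if v ∈ S then T v else 0) :=
            Finset.sum_congr rfl fun S _ => step1 S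
        _ = ∑ v : V, ∑ S ∈ Finset.powersetCard t (Finset.univ : Finset V),
              (if v ∈ S then T v else 0) := Finset.sum_comm
        _ = ∑ v : V, (D : ℝ) * T v := by
            refine Finset.sum_congr rfl fun v _ => ?_
            rw [← Finset.sum_filter, Finset.sum_const,
              card_filter_mem_powersetCard t ht1 v, nsmul_eq_mul]
        _ = (D : ℝ) * ∑ v, T v := by rw [Finset.mul_sum]
    have hobjx : objNew G x = ∑ v, T v := rfl
    calc (D : ℝ) * objNew G x = ∑ S ∈ Finset.powersetCard t (Finset.univ : Finset V),
          ∑ v ∈ S, T v := by rw [hobjx, hsum]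
      _ ≤ R := Finset.sum_le_sum fun S _ => hrestr S
  -- conclude: LPOPTnew G ≤ R / D
  have hLP : LPOPTnew G ≤ R / (D : ℝ) := by
    refine csSup_le ⟨0, zero_mem_feasSet G⟩ ?_
    rintro r ⟨x, hfx, rfl⟩
    rw [le_div_iff₀ (by positivity)]
    rw [mul_comm]
    exact main x hfx
  have htn : (0:ℝ) < (t : ℝ) / (n : ℝ) := by positivity
  calc ((t : ℝ) / (n : ℝ)) * LPOPTnew G
      ≤ ((t : ℝ) / (n : ℝ)) * (R / (D : ℝ)) :=
        mul_le_mul_of_nonneg_left hLP (le_of_lt htn)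
    _ = (1 / (C : ℝ)) * R := by
        have hkeyR : (n : ℝ) * (D : ℝ) = (C : ℝ) * (t : ℝ) := by
          exact_mod_cast hkey
        field_simp
        nlinarith [hkeyR]
end

section
/- Let G = (U,V,E) be a bipartite stochastic graph and let (x_v(u))_{v∈V, u∈U^{(≤ℓ_v)}} be a feasible solution to LP-new for G, with induced edge variables x̃_{u,v}. Then (x̃_{u,v})_{u∈U, v∈V} is a feasible solution to LP-std for G; that is, 0 ≤ x̃_{u,v} ≤ 1 for all u,v, Σ_{v∈V} p_{u,v}·x̃_{u,v} ≤ 1 for every u ∈ U, Σ_{u∈U} p_{u,v}·x̃_{u,v} ≤ 1 for every v ∈ V, and Σ_{u∈U} x̃_{u,v} ≤ ℓ_v for every v ∈ V. Moreover the LP-std objective of (x̃_{u,v}) equals the LP-new objective of (x_v(u)): Σ_{u∈U, v∈V} w_{u,v}·p_{u,v}·x̃_{u,v} = Σ_{v∈V} Σ_{u∈U^{(≤ℓ_v)}} (Σ_{i=1}^{|u|} w_{u_i,v}·g_v^i(u))·x_v(u). -/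
open Finset

variable {U V : Type} [Fintype U] [Fintype V] [DecidableEq U] [DecidableEq V]

/-- The induced edge variables `x̃_{u,v}` of a LP-new solution:
`x̃_{u,v} = Σ_i Σ_{u*: u*_i = u} (∏_{j<i}(1 − p_{u*_j,v}))·x_v(u*)`, so that
`p_{u,v}·x̃_{u,v} = Σ_i Σ_{u*: u*_i = u} g_v^i(u*)·x_v(u*)`. -/
noncomputable def edgeVar (G : StochasticGraph U V)
    (x : ∀ v : V, Tup U (G.patience v) → ℝ) (u0 : U) (v : V) : ℝ :=
  ∑ u : Tup U (G.patience v), ∑ i,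
    (if u.2 i = u0 then
      (∏ j ∈ Finset.univ.filter (fun j => j < i), (1 - G.p (u.2 j) v)) * x v u
    else 0)

/-- Feasibility for LP-std (one-sided, bipartite). -/
def FeasStd (G : StochasticGraph U V) (y : U → V → ℝ) : Prop :=
  (∀ u v, 0 ≤ y u v) ∧ (∀ u v, y u v ≤ 1) ∧
  (∀ u, ∑ v, G.p u v * y u v ≤ 1) ∧
  (∀ v, ∑ u, G.p u v * y u v ≤ 1) ∧
  (∀ v, ∑ u, y u v ≤ (G.patience v : ℝ))

/-- The LP-std objective. -/
noncomputable def objStd (G : StochasticGraph U V) (y : U → V → ℝ) : ℝ :=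
  ∑ u, ∑ v, G.w u v * G.p u v * y u v

/-- `LPOPT_std(G)`: the optimum value of LP-std. -/
noncomputable def LPOPTstd (G : StochasticGraph U V) : ℝ :=
  sSup {r | ∃ y, FeasStd G y ∧ objStd G y = r}


lemma range_tele (q : ℕ → ℝ) (n : ℕ) :
    ∑ i ∈ Finset.range n, q i * ∏ j ∈ Finset.range i, (1 - q j)
      = 1 - ∏ j ∈ Finset.range n, (1 - q j) := by
  induction n with
  | zero => simp
  | succ n ih => rw [Finset.sum_range_succ, Finset.prod_range_succ, ih]; ring

lemma filter_lt_prod {n : ℕ} (f : ℕ → ℝ) (i : Fin n) :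
    ∏ j ∈ Finset.univ.filter (fun j : Fin n => j < i), f j.1
      = ∏ j ∈ Finset.range i.1, f j := by
  refine Finset.prod_bij' (fun (j : Fin n) _ => (j.1 : ℕ))
    (fun k hk => (⟨k, (Finset.mem_range.mp hk).trans i.2⟩ : Fin n))
    (fun a ha => ?_) (fun a ha => ?_) (fun a ha => ?_) (fun a ha => ?_) (fun a ha => rfl)
  · exact Finset.mem_range.mpr (Fin.lt_def.mp (Finset.mem_filter.mp ha).2)
  · exact Finset.mem_filter.mpr ⟨Finset.mem_univ _, Fin.lt_def.mpr (Finset.mem_range.mp ha)⟩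
  · rfl
  · rfl

lemma prefix_prod_nonneg (G : StochasticGraph U V) (v : V) {ℓ : ℕ} (u : Tup U ℓ)
    (i : Fin (u.1.1 + 1)) :
    0 ≤ ∏ j ∈ Finset.univ.filter (fun j => j < i), (1 - G.p (u.2 j) v) :=
  Finset.prod_nonneg fun j _ => sub_nonneg.mpr (G.p_le_one _ _)

lemma prefix_prod_le_one (G : StochasticGraph U V) (v : V) {ℓ : ℕ} (u : Tup U ℓ)
    (i : Fin (u.1.1 + 1)) :
    ∏ j ∈ Finset.univ.filter (fun j => j < i), (1 - G.p (u.2 j) v) ≤ 1 :=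
  Finset.prod_le_one (fun j _ => sub_nonneg.mpr (G.p_le_one _ _))
    (fun j _ => by linarith [G.p_nonneg (u.2 j) v])

lemma sum_gval_le_one (G : StochasticGraph U V) (v : V) {ℓ : ℕ} (u : Tup U ℓ) :
    ∑ i, gval G v u i ≤ 1 := by
  set n := u.1.1 + 1 with hn
  set q : ℕ → ℝ := fun k => if h : k < n then G.p (u.2 ⟨k, h⟩) v else 0 with hq
  have h1 : ∀ j : Fin n, q j.1 = G.p (u.2 j) v := fun j => by simp [hq, j.2]
  have hgv : ∀ i : Fin n, gval G v u i = q i.1 * ∏ j ∈ Finset.range i.1, (1 - q j) := by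
    intro i
    rw [gval, ← filter_lt_prod (fun k => 1 - q k) i, h1 i]
    exact congrArg _ (Finset.prod_congr rfl fun j hj => by rw [h1 j])
  calc ∑ i, gval G v u i
      = ∑ i ∈ Finset.range n, q i * ∏ j ∈ Finset.range i, (1 - q j) := by
        rw [← Fin.sum_univ_eq_sum_range (fun k => q k * ∏ j ∈ Finset.range k, (1 - q j)) n]
        exact Finset.sum_congr rfl fun i _ => hgv i
    _ = 1 - ∏ j ∈ Finset.range n, (1 - q j) := range_tele q n
    _ ≤ 1 := by
        have h0 : 0 ≤ ∏ j ∈ Finset.range n, (1 - q j) := by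
          refine Finset.prod_nonneg fun j _ => ?_
          simp only [hq]
          split_ifs with h
          · linarith [G.p_le_one (u.2 ⟨j, h⟩) v]
          · norm_num
        linarith


/-- The induced edge variables of a feasible LP-new solution form a feasible LP-std
solution with the same objective value. -/
theorem edgeVar_feasible_std (G : StochasticGraph U V)
    (x : ∀ v : V, Tup U (G.patience v) → ℝ) (hx : FeasNew G x) :
    FeasStd G (edgeVar G x) ∧ objStd G (edgeVar G x) = objNew G x := by
  obtain ⟨hx0, hxv, hxu⟩ := hx
  -- collapsing the sum over offline vertices
  have collapse : ∀ (v : V) (f : ∀ u : Tup U (G.patience v), Fin (u.1.1 + 1) → ℝ),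
      (∑ u0 : U, ∑ u : Tup U (G.patience v), ∑ i, (if u.2 i = u0 then f u i else 0))
        = ∑ u : Tup U (G.patience v), ∑ i, f u i := by
    intro v f
    rw [Finset.sum_comm]
    refine Finset.sum_congr rfl fun u _ => ?_
    rw [Finset.sum_comm]
    refine Finset.sum_congr rfl fun i _ => ?_
    simp [Finset.sum_ite_eq]
  have key : ∀ (v : V) (u0 : U), G.p u0 v * edgeVar G x u0 v
      = ∑ u : Tup U (G.patience v), ∑ i, (if u.2 i = u0 then gval G v u i * x v u else 0) := by
    intro v u0
    rw [edgeVar, Finset.mul_sum]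
    refine Finset.sum_congr rfl fun u _ => ?_
    rw [Finset.mul_sum]
    refine Finset.sum_congr rfl fun i _ => ?_
    split_ifs with h
    · rw [gval, ← h]; ring
    · ring
  have keyW : ∀ (v : V) (u0 : U), G.w u0 v * G.p u0 v * edgeVar G x u0 v
      = ∑ u : Tup U (G.patience v), ∑ i,
          (if u.2 i = u0 then G.w (u.2 i) v * (gval G v u i * x v u) else 0) := by
    intro v u0
    rw [mul_assoc, key v u0, Finset.mul_sum]
    refine Finset.sum_congr rfl fun u _ => ?_
    rw [Finset.mul_sum]
    refine Finset.sum_congr rfl fun i _ => ?_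
    split_ifs with h
    · rw [← h]
    · ring
  have edge_nonneg : ∀ (u0 : U) (v : V), 0 ≤ edgeVar G x u0 v := by
    intro u0 v
    refine Finset.sum_nonneg fun u _ => Finset.sum_nonneg fun i _ => ?_
    split_ifs with h
    · exact mul_nonneg (prefix_prod_nonneg G v u i) (hx0 v u)
    · exact le_refl 0
  have edge_le : ∀ (u0 : U) (v : V), edgeVar G x u0 v ≤ ∑ u, x v u := by
    intro u0 v
    rw [edgeVar]
    refine Finset.sum_le_sum fun u _ => ?_
    have hcard : (Finset.univ.filter (fun i => u.2 i = u0)).card ≤ 1 :=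
      Finset.card_le_one.mpr fun a ha b hb => u.2.injective
        (((Finset.mem_filter.mp ha).2).trans ((Finset.mem_filter.mp hb).2).symm)
    calc (∑ i, if u.2 i = u0 then
            (∏ j ∈ Finset.univ.filter (fun j => j < i), (1 - G.p (u.2 j) v)) * x v u else 0)
        ≤ ∑ i, (if u.2 i = u0 then x v u else 0) := by
          refine Finset.sum_le_sum fun i _ => ?_
          split_ifs with h
          · exact mul_le_of_le_one_left (hx0 v u) (prefix_prod_le_one G v u i)
          · exact le_refl 0
      _ = (Finset.univ.filter (fun i => u.2 i = u0)).card • x v u := by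
          rw [← Finset.sum_filter, Finset.sum_const]
      _ ≤ x v u := by
          rw [nsmul_eq_mul]
          calc ((Finset.univ.filter (fun i => u.2 i = u0)).card : ℝ) * x v u
              ≤ 1 * x v u := by
                refine mul_le_mul_of_nonneg_right ?_ (hx0 v u)
                exact_mod_cast hcard
            _ = x v u := one_mul _
  refine ⟨⟨edge_nonneg, ?_, ?_, ?_, ?_⟩, ?_⟩
  · -- y ≤ 1
    exact fun u0 v => (edge_le u0 v).trans (hxv v)
  · -- offline constraint
    intro u0
    calc ∑ v, G.p u0 v * edgeVar G x u0 v
        = ∑ v, ∑ u : Tup U (G.patience v), ∑ i,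
            (if u.2 i = u0 then gval G v u i * x v u else 0) :=
          Finset.sum_congr rfl fun v _ => key v u0
      _ ≤ 1 := hxu u0
  · -- online probability constraint
    intro v
    calc ∑ u0, G.p u0 v * edgeVar G x u0 v
        = ∑ u : Tup U (G.patience v), ∑ i, gval G v u i * x v u := by
          rw [Finset.sum_congr rfl fun u0 _ => key v u0]
          exact collapse v _
      _ = ∑ u : Tup U (G.patience v), (∑ i, gval G v u i) * x v u := by
          exact Finset.sum_congr rfl fun u _ => (Finset.sum_mul _ _ _).symm
      _ ≤ ∑ u : Tup U (G.patience v), x v u := by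
          refine Finset.sum_le_sum fun u _ => ?_
          exact mul_le_of_le_one_left (hx0 v u) (sum_gval_le_one G v u)
      _ ≤ 1 := hxv v
  · -- patience constraint
    intro v
    calc ∑ u0, edgeVar G x u0 v
        = ∑ u : Tup U (G.patience v), ∑ i,
            (∏ j ∈ Finset.univ.filter (fun j => j < i), (1 - G.p (u.2 j) v)) * x v u := by
          rw [Finset.sum_congr rfl fun u0 _ => (rfl : edgeVar G x u0 v = _)]
          exact collapse v _
      _ = ∑ u : Tup U (G.patience v),
            (∑ i, ∏ j ∈ Finset.univ.filter (fun j => j < i), (1 - G.p (u.2 j) v)) * x v u :=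
          Finset.sum_congr rfl fun u _ => (Finset.sum_mul _ _ _).symm
      _ ≤ ∑ u : Tup U (G.patience v), (G.patience v : ℝ) * x v u := by
          refine Finset.sum_le_sum fun u _ => ?_
          refine mul_le_mul_of_nonneg_right ?_ (hx0 v u)
          calc (∑ i, ∏ j ∈ Finset.univ.filter (fun j => j < i), (1 - G.p (u.2 j) v))
              ≤ ∑ _i : Fin (u.1.1 + 1), (1 : ℝ) :=
                Finset.sum_le_sum fun i _ => prefix_prod_le_one G v u i
            _ = ((u.1.1 + 1 : ℕ) : ℝ) := by simp
            _ ≤ (G.patience v : ℝ) := by exact_mod_cast Nat.succ_le_of_lt u.1.2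
      _ = (G.patience v : ℝ) * ∑ u, x v u := (Finset.mul_sum _ _ _).symm
      _ ≤ (G.patience v : ℝ) * 1 :=
          mul_le_mul_of_nonneg_left (hxv v) (Nat.cast_nonneg _)
      _ = (G.patience v : ℝ) := mul_one _
  · -- objective equality
    rw [objStd, objNew, Finset.sum_comm]
    refine Finset.sum_congr rfl fun v _ => ?_
    calc ∑ u0, G.w u0 v * G.p u0 v * edgeVar G x u0 v
        = ∑ u : Tup U (G.patience v), ∑ i, G.w (u.2 i) v * (gval G v u i * x v u) := by
          rw [Finset.sum_congr rfl fun u0 _ => keyW v u0]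
          exact collapse v _
      _ = ∑ u : Tup U (G.patience v), objTerm G v u * x v u := by
          refine Finset.sum_congr rfl fun u _ => ?_
          rw [objTerm, Finset.sum_mul]
          exact Finset.sum_congr rfl fun i _ => by ring
end
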